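/- If f is annihilated by the operator [∏_{k=1}^{m−1}(T_x − q^k)](T_x + x^m), then the function g(x) := f(q/x) is also annihilated by the same operator (with T_x acting in x). -/

import Mathlib

/-- Apply the product of operators `∏ (T_x - c)` (over the constants `c` in `cs`,
where `(T_x f)(x) = f(xq)`) to a function `f`. -/
noncomputable def applyProd (q : ℂ) (cs : List ℂ) (f : ℂ → ℂ) : ℂ → ℂ :=
  cs.foldr (fun c g => fun x => g (x * q) - c * g x) f

lemma applyProd_cons (q c : ℂ) (cs : List ℂ) (f : ℂ → ℂ) :
    applyProd q (c :: cs) f = fun x => applyProd q cs f (x * q) - c * applyProd q cs f x := rfl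

lemma applyProd_congr (q : ℂ) (hq : q ≠ 0) (cs : List ℂ) (u v : ℂ → ℂ)
    (h : ∀ z, z ≠ 0 → u z = v z) : ∀ x, x ≠ 0 → applyProd q cs u x = applyProd q cs v x := by
  induction cs with
  | nil => exact h
  | cons c cs ih =>
    intro x hx
    simp only [applyProd_cons]
    rw [ih x hx, ih (x * q) (mul_ne_zero hx hq)]

lemma applyProd_perm (q : ℂ) {cs cs' : List ℂ} (h : cs.Perm cs') (f : ℂ → ℂ) :
    applyProd q cs f = applyProd q cs' f := by
  induction h with
  | nil => rfl
  | cons a _ ih => simp only [applyProd_cons, ih]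
  | swap a b l =>
    funext x
    simp only [applyProd_cons]
    ring
  | trans _ _ ih1 ih2 => rw [ih1, ih2]

lemma applyProd_inv (q : ℂ) (hq : q ≠ 0) (m : ℕ) (u : ℂ → ℂ) :
    ∀ (cs : List ℂ), (∀ c ∈ cs, c ≠ 0) → ∀ x, x ≠ 0 →
      applyProd q cs (fun z => z ^ m * u (1 / z)) x
      = (cs.map (fun c => -c)).prod *
        (x ^ m * applyProd q (cs.map (fun c => q ^ m / c)) u (1 / (x * q ^ cs.length))) := by
  intro cs
  induction cs with
  | nil => intro _ x hx; simp [applyProd]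
  | cons c cs ih =>
    intro hcs x hx
    have hc : c ≠ 0 := hcs c (by simp)
    have hcs' : ∀ c' ∈ cs, c' ≠ 0 := fun c' h => hcs c' (by simp [h])
    have hqn : (q : ℂ) ^ cs.length ≠ 0 := pow_ne_zero _ hq
    simp only [applyProd_cons, List.map_cons, List.prod_cons, List.length_cons]
    rw [ih hcs' (x * q) (mul_ne_zero hx hq), ih hcs' x hx]
    have e1 : 1 / (x * q * q ^ cs.length) = 1 / (x * q ^ (cs.length + 1)) := by
      rw [pow_succ]; ring_nf
    have e2 : 1 / (x * q ^ (cs.length + 1)) * q = 1 / (x * q ^ cs.length) := by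
      rw [pow_succ]
      field_simp
    rw [e1, e2]
    rw [mul_pow]
    field_simp
    ring

/-- If `f` is annihilated by `[∏_{k=1}^{m-1}(T_x - q^k)](T_x + x^m)`, then
`g(x) := f(q/x)` is annihilated by the same operator. -/
theorem qdifference_invariance_inversion (m : ℕ) (hm : 0 < m) (q : ℂ) (hq0 : q ≠ 0)
    (f : ℂ → ℂ)
    (hf : ∀ x : ℂ, x ≠ 0 →
      applyProd q ((List.range (m - 1)).map fun k => q ^ (k + 1))
        (fun z => f (z * q) + z ^ m * f z) x = 0) :
    ∀ x : ℂ, x ≠ 0 →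
      applyProd q ((List.range (m - 1)).map fun k => q ^ (k + 1))
        (fun z => (fun w => f (q / w)) (z * q) + z ^ m * (fun w => f (q / w)) z) x = 0 := by
  intro x hx
  set n := m - 1 with hn
  set cs : List ℂ := (List.range n).map fun k => q ^ (k + 1) with hcs_def
  set h : ℂ → ℂ := fun z => f (z * q) + z ^ m * f z with hh
  -- Step 1: the goal's inner function agrees with `z ↦ z^m * h (1/z)` off zero.
  have step1 : applyProd q cs
      (fun z => (fun w => f (q / w)) (z * q) + z ^ m * (fun w => f (q / w)) z) x
      = applyProd q cs (fun z => z ^ m * h (1 / z)) x := by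
    apply applyProd_congr q hq0
    · intro z hz
      simp only [hh]
      have h1 : q / (z * q) = 1 / z := by rw [mul_comm]; field_simp
      have h2 : 1 / z * q = q / z := by ring
      rw [h1, h2]
      have h3 : (1 / z) ^ m = 1 / z ^ m := by rw [div_pow, one_pow]
      rw [h3]
      field_simp
      ring
    · exact hx
  rw [step1]
  -- Step 2: apply the inversion lemma.
  have hcs_ne : ∀ c ∈ cs, c ≠ 0 := by
    intro c hc
    simp only [hcs_def, List.mem_map, List.mem_range] at hc
    obtain ⟨k, _, rfl⟩ := hc
    exact pow_ne_zero _ hq0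
  rw [applyProd_inv q hq0 m h cs hcs_ne x hx]
  -- Step 3: the transformed constant list is a permutation of the original.
  have hmapeq : cs.map (fun c => q ^ m / c) = cs.reverse := by
    simp only [hcs_def, List.map_map, ← List.map_reverse]
    apply List.ext_getElem
    · simp
    · intro i h1 h2
      simp only [List.getElem_map, List.getElem_reverse, List.getElem_range,
        List.length_range, Function.comp_apply] at *
      rw [div_eq_iff (pow_ne_zero _ hq0), ← pow_add]
      congr 1
      simp only [List.length_map, List.length_range] at h1 h2
      omega
  have hperm : (cs.map (fun c => q ^ m / c)).Perm cs := by
    rw [hmapeq]; exact List.reverse_perm cs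
  rw [applyProd_perm q hperm h]
  rw [hf (1 / (x * q ^ cs.length)) (one_div_ne_zero (mul_ne_zero hx (pow_ne_zero _ hq0)))]
  ring
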